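/- Let (A,≻,≺) be a dendriform algebra, (l_≻,r_≻,l_≺,r_≺,V) a bimodule of (A,≻,≺), and T : V → A an O-operator associated to this bimodule. Define four bilinear products on V by u↘v = l_≻(T(u))v, u↗v = r_≻(T(v))u, u↙v = l_≺(T(u))v, u↖v = r_≺(T(v))u. Then (V,↘,↗,↖,↙) is a quadri-algebra, and T is a homomorphism of dendriform algebras from the associated horizontal dendriform algebra of V (with products u≻v = u↗v + u↘v and u≺v = u↖v + u↙v) to (A,≻,≺). -/

import Mathlib

open LinearMap

/-- Dendriform algebra axioms for a pair of bilinear products `succ` (≻) and `prec` (≺). -/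
def IsDendriform {K A : Type*} [Field K] [AddCommGroup A] [Module K A]
    (succ prec : A →ₗ[K] A →ₗ[K] A) : Prop :=
  (∀ x y z : A, prec (prec x y) z = prec x (succ y z + prec y z)) ∧
  (∀ x y z : A, prec (succ x y) z = succ x (prec y z)) ∧
  (∀ x y z : A, succ x (succ y z) = succ (succ x y + prec x y) z)

/-- Bimodule of a dendriform algebra `(A, succ, prec)` on `V`
(maps `l_≻ = ls`, `r_≻ = rs`, `l_≺ = lp`, `r_≺ = rp`). -/
def IsDendBimodule {K A V : Type*} [Field K] [AddCommGroup A] [Module K A]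
    [AddCommGroup V] [Module K V] (succ prec : A →ₗ[K] A →ₗ[K] A)
    (ls rs lp rp : A →ₗ[K] V →ₗ[K] V) : Prop :=
  (∀ x y : A, lp (prec x y) = lp x ∘ₗ (lp y + ls y)) ∧
  (∀ x y : A, rp x ∘ₗ lp y = lp y ∘ₗ (rp x + rs x)) ∧
  (∀ x y : A, rp x ∘ₗ rp y = rp (succ y x + prec y x)) ∧
  (∀ x y : A, lp (succ x y) = ls x ∘ₗ lp y) ∧
  (∀ x y : A, rp x ∘ₗ ls y = ls y ∘ₗ rp x) ∧
  (∀ x y : A, rp x ∘ₗ rs y = rs (prec y x)) ∧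
  (∀ x y : A, ls (succ x y + prec x y) = ls x ∘ₗ ls y) ∧
  (∀ x y : A, rs x ∘ₗ (lp y + ls y) = ls y ∘ₗ rs x) ∧
  (∀ x y : A, rs x ∘ₗ (rs y + rp y) = rs (succ y x))

/-- Quadri-algebra axioms for the four products ↘ (`dse`), ↗ (`dne`), ↖ (`dnw`), ↙ (`dsw`). -/
def IsQuadri {K A : Type*} [Field K] [AddCommGroup A] [Module K A]
    (dse dne dnw dsw : A →ₗ[K] A →ₗ[K] A) : Prop :=
  (∀ x y z : A, dnw (dnw x y) z = dnw x (dse y z + dne y z + dnw y z + dsw y z)) ∧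
  (∀ x y z : A, dnw (dne x y) z = dne x (dnw y z + dsw y z)) ∧
  (∀ x y z : A, dne (dne x y + dnw x y) z = dne x (dne y z + dse y z)) ∧
  (∀ x y z : A, dnw (dsw x y) z = dsw x (dne y z + dnw y z)) ∧
  (∀ x y z : A, dnw (dse x y) z = dse x (dnw y z)) ∧
  (∀ x y z : A, dne (dse x y + dsw x y) z = dse x (dne y z)) ∧
  (∀ x y z : A, dsw (dnw x y + dsw x y) z = dsw x (dse y z + dsw y z)) ∧
  (∀ x y z : A, dsw (dne x y + dse x y) z = dse x (dsw y z)) ∧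
  (∀ x y z : A, dse (dse x y + dne x y + dnw x y + dsw x y) z = dse x (dse y z))

/-!
Each quadri-algebra axiom on `V` is one of the nine bimodule identities, evaluated at
`T`-images: the products of `V` are the actions of `A` through `T`, and the `O`-operator
identities turn `T` of a sum of products of `V` into the corresponding product of `A`.
-/

section OOperator

variable {R A V : Type*} [CommSemiring R] [AddCommMonoid A] [Module R A]
  [AddCommMonoid V] [Module R V]
  {succ prec : A →ₗ[R] A →ₗ[R] A} {ls rs lp rp : A →ₗ[R] V →ₗ[R] V} {T : V →ₗ[R] A}

theorem Ooperator_map_succ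
    (hT1 : ∀ u v : V, succ (T u) (T v) = T (ls (T u) v + rs (T v) u)) (u v : V) :
    T (rs (T v) u + ls (T u) v) = succ (T u) (T v) := by
  rw [hT1, add_comm]

theorem Ooperator_map_prec
    (hT2 : ∀ u v : V, prec (T u) (T v) = T (lp (T u) v + rp (T v) u)) (u v : V) :
    T (rp (T v) u + lp (T u) v) = prec (T u) (T v) := by
  rw [hT2, add_comm]

theorem Ooperator_map_succ_add_prec
    (hT1 : ∀ u v : V, succ (T u) (T v) = T (ls (T u) v + rs (T v) u))
    (hT2 : ∀ u v : V, prec (T u) (T v) = T (lp (T u) v + rp (T v) u)) (u v : V) :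
    T (ls (T u) v + rs (T v) u + rp (T v) u + lp (T u) v) =
      succ (T u) (T v) + prec (T u) (T v) := by
  rw [hT1, hT2, ← map_add]
  congr 1
  abel

end OOperator

theorem isQuadri_of_Ooperator {K A V : Type*} [Field K] [AddCommGroup A] [Module K A]
    [AddCommGroup V] [Module K V] {succ prec : A →ₗ[K] A →ₗ[K] A}
    {ls rs lp rp : A →ₗ[K] V →ₗ[K] V} {T : V →ₗ[K] A}
    (hbim : IsDendBimodule succ prec ls rs lp rp)
    (hT1 : ∀ u v : V, succ (T u) (T v) = T (ls (T u) v + rs (T v) u))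
    (hT2 : ∀ u v : V, prec (T u) (T v) = T (lp (T u) v + rp (T v) u)) :
    IsQuadri (ls ∘ₗ T) (rs ∘ₗ T).flip (rp ∘ₗ T).flip (lp ∘ₗ T) := by
  obtain ⟨hlp_prec, hrp_lp, hrp_rp, hlp_succ, hrp_ls, hrp_rs, hls_star, hrs_l, hrs_r⟩ := hbim
  refine ⟨fun x y z => ?_, fun x y z => ?_, fun x y z => ?_, fun x y z => ?_,
    fun x y z => ?_, fun x y z => ?_, fun x y z => ?_, fun x y z => ?_, fun x y z => ?_⟩ <;>
    simp only [comp_apply, flip_apply]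
  · rw [Ooperator_map_succ_add_prec hT1 hT2 y z]
    simpa using LinearMap.congr_fun (hrp_rp (T z) (T y)) x
  · rw [Ooperator_map_prec hT2 y z]
    simpa using LinearMap.congr_fun (hrp_rs (T z) (T y)) x
  · rw [Ooperator_map_succ hT1 y z]
    simpa using LinearMap.congr_fun (hrs_r (T z) (T y)) x
  · rw [add_comm (rs (T z) y)]
    simpa using LinearMap.congr_fun (hrp_lp (T z) (T x)) y
  · simpa using LinearMap.congr_fun (hrp_ls (T z) (T x)) y
  · rw [add_comm (ls (T x) y)]
    simpa using LinearMap.congr_fun (hrs_l (T z) (T x)) y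
  · rw [Ooperator_map_prec hT2 x y, add_comm (ls (T y) z)]
    simpa using LinearMap.congr_fun (hlp_prec (T x) (T y)) z
  · rw [Ooperator_map_succ hT1 x y]
    simpa using LinearMap.congr_fun (hlp_succ (T x) (T y)) z
  · rw [Ooperator_map_succ_add_prec hT1 hT2 x y]
    simpa using LinearMap.congr_fun (hls_star (T x) (T y)) z

theorem Ooperator_dendriform_gives_quadri_general
    {K A V : Type*} [Field K] [AddCommGroup A] [Module K A]
    [AddCommGroup V] [Module K V]
    (succ prec : A →ₗ[K] A →ₗ[K] A)
    (ls rs lp rp : A →ₗ[K] V →ₗ[K] V)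
    (hbim : IsDendBimodule succ prec ls rs lp rp)
    (T : V →ₗ[K] A)
    (hT1 : ∀ u v : V, succ (T u) (T v) = T (ls (T u) v + rs (T v) u))
    (hT2 : ∀ u v : V, prec (T u) (T v) = T (lp (T u) v + rp (T v) u)) :
    IsQuadri (ls ∘ₗ T) (rs ∘ₗ T).flip (rp ∘ₗ T).flip (lp ∘ₗ T) ∧
    (∀ u v : V, T ((rs ∘ₗ T).flip u v + (ls ∘ₗ T) u v) = succ (T u) (T v)) ∧
    (∀ u v : V, T ((rp ∘ₗ T).flip u v + (lp ∘ₗ T) u v) = prec (T u) (T v)) :=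
  ⟨isQuadri_of_Ooperator hbim hT1 hT2, Ooperator_map_succ hT1, Ooperator_map_prec hT2⟩

/-- Proposition 3.4.6: if `T : V → A` is an `O`-operator of a dendriform algebra
`(A, ≻, ≺)` associated to a bimodule `(l_≻, r_≻, l_≺, r_≺, V)`, then the products
`u↘v = l_≻(T u) v`, `u↗v = r_≻(T v) u`, `u↙v = l_≺(T u) v`, `u↖v = r_≺(T v) u` make
`V` a quadri-algebra, and `T` is a homomorphism from the associated horizontal
dendriform algebra of `V` to `(A, ≻, ≺)`. -/
theorem Ooperator_dendriform_gives_quadri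
    {K A V : Type*} [Field K] [CharZero K] [AddCommGroup A] [Module K A]
    [AddCommGroup V] [Module K V]
    (succ prec : A →ₗ[K] A →ₗ[K] A)
    (hdend : IsDendriform succ prec)
    (ls rs lp rp : A →ₗ[K] V →ₗ[K] V)
    (hbim : IsDendBimodule succ prec ls rs lp rp)
    (T : V →ₗ[K] A)
    (hT1 : ∀ u v : V, succ (T u) (T v) = T (ls (T u) v + rs (T v) u))
    (hT2 : ∀ u v : V, prec (T u) (T v) = T (lp (T u) v + rp (T v) u)) :
    IsQuadri (ls ∘ₗ T) (rs ∘ₗ T).flip (rp ∘ₗ T).flip (lp ∘ₗ T) ∧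
    (∀ u v : V, T ((rs ∘ₗ T).flip u v + (ls ∘ₗ T) u v) = succ (T u) (T v)) ∧
    (∀ u v : V, T ((rp ∘ₗ T).flip u v + (lp ∘ₗ T) u v) = prec (T u) (T v)) :=
  Ooperator_dendriform_gives_quadri_general succ prec ls rs lp rp hbim T hT1 hT2
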